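/- arXiv:2008.13203 — 2 statements merged into one kernel-verified Lean document; each statement's English description precedes it below -/
import Mathlib

section
/- Let 0 ≠ v = Σ_{i=0}^d c_i A̅_i ∈ 𝔽S satisfy A̅_j v = k̅_j v for every 0 ≤ j ≤ d. If R_0 ∉ U(v), then R_u ∉ U(v) for every 0 ≤ u ≤ d with p ∤ k_u. -/
open scoped Classical

/-- An association scheme of class `d` on a nonempty finite set `X`:
a partition of `X × X` into nonempty relations `r 0, …, r d` with
`r 0` the diagonal, closed under converse (`star`), and with
intersection numbers `pNum i j k`. -/
structure AssocScheme (X : Type*) [Fintype X] [Nonempty X] (d : ℕ) where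
  r : Fin (d + 1) → Set (X × X)
  r_nonempty : ∀ i, (r i).Nonempty
  existsUnique_rel : ∀ q : X × X, ∃! i, q ∈ r i
  r_zero : r 0 = {q : X × X | q.1 = q.2}
  star : Fin (d + 1) → Fin (d + 1)
  mem_star : ∀ (i : Fin (d + 1)) (q : X × X), q ∈ r (star i) ↔ (q.2, q.1) ∈ r i
  pNum : Fin (d + 1) → Fin (d + 1) → Fin (d + 1) → ℕ
  ncard_eq : ∀ (i j k : Fin (d + 1)), ∀ q ∈ r k,
    {z : X | (q.1, z) ∈ r i ∧ (z, q.2) ∈ r j}.ncard = pNum i j k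

namespace AssocScheme

variable {X : Type*} [Fintype X] [Nonempty X] {d : ℕ}

/-- The valency `k_i = p_{i i*}^0` of the relation `R_i`. -/
def val (S : AssocScheme X d) (i : Fin (d + 1)) : ℕ := S.pNum i (S.star i) 0

/-- The complex product `UV = {R_k : p_{uv}^k > 0 for some R_u ∈ U, R_v ∈ V}`. -/
def cmul (S : AssocScheme X d) (U V : Set (Fin (d + 1))) : Set (Fin (d + 1)) :=
  {k | ∃ u ∈ U, ∃ v ∈ V, 0 < S.pNum u v k}

/-- A nonempty subset `T` is closed if `T*T ⊆ T`. -/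
def IsClosedSubset (S : AssocScheme X d) (T : Set (Fin (d + 1))) : Prop :=
  T.Nonempty ∧ S.cmul (S.star '' T) T ⊆ T

/-- The thin radical `O_ϑ(S) = {R_i : k_i = 1}`. -/
def thinRadical (S : AssocScheme X d) : Set (Fin (d + 1)) := {i | S.val i = 1}

/-- A closed subset `T` is strongly normal if `R_{i*} T R_i ⊆ T` for all `i`. -/
def IsStronglyNormal (S : AssocScheme X d) (T : Set (Fin (d + 1))) : Prop :=
  S.IsClosedSubset T ∧ ∀ i : Fin (d + 1), S.cmul (S.cmul {S.star i} T) {i} ⊆ T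

/-- The thin residue `O^ϑ(S)`: the intersection of all strongly normal closed subsets. -/
def thinResidue (S : AssocScheme X d) : Set (Fin (d + 1)) :=
  ⋂₀ {T | S.IsStronglyNormal T}

/-- `⟨H⟩`: the intersection of all closed subsets containing `H`. -/
def closure (S : AssocScheme X d) (H : Set (Fin (d + 1))) : Set (Fin (d + 1)) :=
  ⋂₀ {T | S.IsClosedSubset T ∧ H ⊆ T}

/-- The adjacency matrix `A̅_i` of `R_i`, with entries in `𝔽`. -/
noncomputable def adj (S : AssocScheme X d) (𝔽 : Type*) [Field 𝔽] (i : Fin (d + 1)) :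
    Matrix X X 𝔽 :=
  Matrix.of fun x y => if (x, y) ∈ S.r i then 1 else 0

/-- `v` spans a trivial `𝔽S`-submodule of the regular `𝔽S`-module:
`v` is a nonzero element of `𝔽S` with `A̅_i v = k̅_i v` for all `i`. -/
def IsTrivialVector (S : AssocScheme X d) (𝔽 : Type*) [Field 𝔽] (v : Matrix X X 𝔽) : Prop :=
  v ≠ 0 ∧ v ∈ Submodule.span 𝔽 (Set.range (S.adj 𝔽)) ∧
    ∀ i : Fin (d + 1), S.adj 𝔽 i * v = (S.val i : 𝔽) • v

/-- `S` is `p`-transitive over `𝔽` (of characteristic `p`) if the regular `𝔽S`-module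
contains a unique trivial `𝔽S`-submodule. -/
def IsPTransitive (S : AssocScheme X d) (𝔽 : Type*) [Field 𝔽] : Prop :=
  ∃! W : Submodule 𝔽 (Matrix X X 𝔽),
    ∃ v : Matrix X X 𝔽, S.IsTrivialVector 𝔽 v ∧ W = Submodule.span 𝔽 {v}

/-- A subset `T ⊆ S` is singular if `O_ϑ(S) ⊆ T` and
`R_x R_{y*} R_y R_z ⊆ T` for all `R_x ∈ O_ϑ(S)`, `R_y ∈ S`, `R_z ∈ T`. -/
def IsSingular (S : AssocScheme X d) (T : Set (Fin (d + 1))) : Prop :=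
  S.thinRadical ⊆ T ∧ ∀ x ∈ S.thinRadical, ∀ y : Fin (d + 1), ∀ z ∈ T,
    S.cmul (S.cmul (S.cmul {x} {S.star y}) {y}) {z} ⊆ T

/-- `S_{p'} = {R_i ∈ S : p ∤ k_i}`. -/
def pPrimePart (S : AssocScheme X d) (p : ℕ) : Set (Fin (d + 1)) :=
  {i | ¬ p ∣ S.val i}

end AssocScheme


namespace AssocScheme

variable {X : Type*} [Fintype X] [Nonempty X] {d : ℕ}

/-- If a pair lies in two relations, the indices agree. -/
lemma rel_unique (S : AssocScheme X d) {i j : Fin (d + 1)} {q : X × X}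
    (hi : q ∈ S.r i) (hj : q ∈ S.r j) : i = j := by
  obtain ⟨k, -, hk⟩ := S.existsUnique_rel q
  rw [hk i hi, hk j hj]

lemma mem_r_zero (S : AssocScheme X d) (x : X) : (x, x) ∈ S.r 0 := by
  rw [S.r_zero]; rfl

lemma star_star (S : AssocScheme X d) (i : Fin (d + 1)) : S.star (S.star i) = i := by
  obtain ⟨q, hq⟩ := S.r_nonempty i
  have hq' : q ∈ S.r (S.star (S.star i)) := by
    rw [S.mem_star, S.mem_star]; exact hq
  exact S.rel_unique hq' hq

/-- The out-degree of each vertex in `R_j` is `k_j`. -/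
lemma outdeg (S : AssocScheme X d) (j : Fin (d + 1)) (x : X) :
    {z : X | (x, z) ∈ S.r j}.ncard = S.val j := by
  have h := S.ncard_eq j (S.star j) 0 (x, x) (S.mem_r_zero x)
  have hset : {z : X | ((x, x).1, z) ∈ S.r j ∧ (z, (x, x).2) ∈ S.r (S.star j)}
      = {z : X | (x, z) ∈ S.r j} := by
    ext z
    simp only [Set.mem_setOf_eq]
    constructor
    · exact fun h => h.1
    · intro h; exact ⟨h, (S.mem_star j (z, x)).2 h⟩
  rw [hset] at h
  exact h

lemma outdeg_card (S : AssocScheme X d) (j : Fin (d + 1)) (x : X) :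
    (Finset.univ.filter (fun z => (x, z) ∈ S.r j)).card = S.val j := by
  classical
  have := S.outdeg j x
  rwa [Set.ncard_eq_toFinset_card', Set.toFinset_setOf] at this

lemma val_star (S : AssocScheme X d) (j : Fin (d + 1)) :
    S.val (S.star j) = S.val j := by
  classical
  have key : ∑ x : X, ∑ z : X, (if (x, z) ∈ S.r j then 1 else 0)
      = ∑ z : X, ∑ x : X, (if (x, z) ∈ S.r j then 1 else 0) := Finset.sum_comm
  have h1 : ∀ x : X, ∑ z : X, (if (x, z) ∈ S.r j then 1 else 0) = S.val j := by
    intro x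
    rw [← Finset.sum_filter]
    simpa using S.outdeg_card j x
  have h2 : ∀ z : X, ∑ x : X, (if (x, z) ∈ S.r j then 1 else 0) = S.val (S.star j) := by
    intro z
    have : ∀ x : X, ((x, z) ∈ S.r j) ↔ ((z, x) ∈ S.r (S.star j)) := by
      intro x; exact (S.mem_star j (z, x)).symm
    calc ∑ x : X, (if (x, z) ∈ S.r j then 1 else 0)
        = ∑ x : X, (if (z, x) ∈ S.r (S.star j) then 1 else 0) := by
          refine Finset.sum_congr rfl fun x _ => by rw [this x]
      _ = S.val (S.star j) := by
          rw [← Finset.sum_filter]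
          simpa using S.outdeg_card (S.star j) z
  rw [Finset.sum_congr rfl fun x _ => h1 x, Finset.sum_congr rfl fun z _ => h2 z,
    Finset.sum_const, Finset.sum_const, smul_eq_mul, smul_eq_mul] at key
  have hX : 0 < Fintype.card X := Fintype.card_pos
  exact (Nat.eq_of_mul_eq_mul_left hX key.symm)

end AssocScheme

/-- Let `0 ≠ v = Σ c_i A̅_i` satisfy `A̅_j v = k̅_j v` for all `j`. If `R_0 ∉ U(v)`,
then `R_u ∉ U(v)` for every `u` with `p ∤ k_u`. -/
theorem not_mem_support_of_not_dvd_val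
    {X : Type*} [Fintype X] [Nonempty X] {d : ℕ} (S : AssocScheme X d)
    (𝔽 : Type*) [Field 𝔽] (p : ℕ) [Fact p.Prime] [CharP 𝔽 p]
    (c : Fin (d + 1) → 𝔽) (v : Matrix X X 𝔽)
    (hv : v = ∑ i : Fin (d + 1), c i • S.adj 𝔽 i) (hv0 : v ≠ 0)
    (heig : ∀ j : Fin (d + 1), S.adj 𝔽 j * v = (S.val j : 𝔽) • v)
    (h0 : c 0 = 0) :
    ∀ u : Fin (d + 1), ¬ p ∣ S.val u → c u = 0 := by
  classical
  -- entry of v at a pair in R_i is c i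
  have ventry : ∀ (i : Fin (d + 1)) (a b : X), (a, b) ∈ S.r i → v a b = c i := by
    intro i a b hab
    rw [hv]
    rw [Matrix.sum_apply]
    rw [Finset.sum_eq_single i]
    · simp [AssocScheme.adj, hab]
    · intro k _ hk
      have : (a, b) ∉ S.r k := fun h => hk (S.rel_unique h hab)
      simp [AssocScheme.adj, this]
    · simp
  obtain ⟨x⟩ := ‹Nonempty X›
  have key : ∀ j : Fin (d + 1), (S.val j : 𝔽) * c (S.star j) = 0 := by
    intro j
    have h := congrFun (congrFun (heig j) x) x
    rw [Matrix.mul_apply, Matrix.smul_apply, smul_eq_mul] at h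
    have hvxx : v x x = c 0 := ventry 0 x x (S.mem_r_zero x)
    have hLHS : ∑ z : X, S.adj 𝔽 j x z * v z x = (S.val j : 𝔽) * c (S.star j) := by
      have hterm : ∀ z : X, S.adj 𝔽 j x z * v z x
          = if (x, z) ∈ S.r j then c (S.star j) else 0 := by
        intro z
        by_cases hz : (x, z) ∈ S.r j
        · have : (z, x) ∈ S.r (S.star j) := (S.mem_star j (z, x)).2 hz
          rw [ventry (S.star j) z x this]
          simp [AssocScheme.adj, hz]
        · simp [AssocScheme.adj, hz]
      rw [Finset.sum_congr rfl fun z _ => hterm z, ← Finset.sum_filter,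
        Finset.sum_const, S.outdeg_card j x, nsmul_eq_mul]
    rw [hLHS, hvxx, h0, mul_zero] at h
    exact h
  intro u hu
  have h := key (S.star u)
  rw [S.star_star, S.val_star] at h
  have hval : (S.val u : 𝔽) ≠ 0 := by
    intro hc
    exact hu ((CharP.cast_eq_zero_iff 𝔽 p (S.val u)).1 hc)
  exact (mul_eq_zero.1 h).resolve_left hval
end

section
/- If T is a singular subset of an association scheme S, then the thin residue O^ϑ(S) is contained in T. -/
open scoped Classical

/-! Call `x` and `y` siblings if they are `R_i`-successors of a common point for some `i`.
Regularity of the scheme lets an `R_i`-step from one end of a sibling pair be matched by an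
`R_i`-step from the other end ending at a point connected to the first by siblings, so the
relations `R_{i*} W R_i` preserve the connected components of the sibling graph whenever the
relations in `W` do. Hence the indices of the relations contained in these components form a
strongly normal closed subset, which contains the thin residue. On the other hand, taking
`R_x = R_0` in the definition of a singular subset `T` gives `R_{y*} R_y T ⊆ T`, and this is
exactly a single sibling step; so `T` contains the index of every pair joined by a sibling
path. -/

namespace AssocScheme

variable {X : Type*} [Fintype X] [Nonempty X] {d : ℕ} (S : AssocScheme X d)

lemma exists_mem_r (q : X × X) : ∃ i, q ∈ S.r i := (S.existsUnique_rel q).exists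

lemma eq_of_mem_r {q : X × X} {i j : Fin (d + 1)} (hi : q ∈ S.r i) (hj : q ∈ S.r j) :
    i = j :=
  (S.existsUnique_rel q).unique hi hj

lemma mem_r_zero_self (x : X) : (x, x) ∈ S.r 0 := by simp [S.r_zero]

lemma pNum_pos_of_mem {u v k : Fin (d + 1)} {x y z : X}
    (hxy : (x, y) ∈ S.r k) (hxz : (x, z) ∈ S.r u) (hzy : (z, y) ∈ S.r v) :
    0 < S.pNum u v k := by
  rw [← S.ncard_eq u v k (x, y) hxy]
  exact (Set.ncard_pos (Set.toFinite _)).mpr ⟨z, hxz, hzy⟩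

lemma exists_mem_of_pNum_pos {u v k : Fin (d + 1)} (hpos : 0 < S.pNum u v k) {x y : X}
    (hxy : (x, y) ∈ S.r k) : ∃ z, (x, z) ∈ S.r u ∧ (z, y) ∈ S.r v := by
  have hcard : {z | (x, z) ∈ S.r u ∧ (z, y) ∈ S.r v}.ncard = S.pNum u v k :=
    S.ncard_eq u v k (x, y) hxy
  exact Set.nonempty_of_ncard_ne_zero (hcard.trans_ne hpos.ne')

lemma exists_mem_r_of_mem_r {u v k : Fin (d + 1)} {x y x' y' z : X}
    (hxy : (x, y) ∈ S.r k) (hxz : (x, z) ∈ S.r u) (hzy : (z, y) ∈ S.r v)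
    (hxy' : (x', y') ∈ S.r k) : ∃ z', (x', z') ∈ S.r u ∧ (z', y') ∈ S.r v :=
  S.exists_mem_of_pNum_pos (S.pNum_pos_of_mem hxy hxz hzy) hxy'

lemma exists_mem_r_right (x : X) (i : Fin (d + 1)) : ∃ y, (x, y) ∈ S.r i := by
  obtain ⟨⟨a, b⟩, hab⟩ := S.r_nonempty i
  obtain ⟨y, hxy, -⟩ := S.exists_mem_r_of_mem_r (S.mem_r_zero_self a) hab
    ((S.mem_star i (b, a)).mpr hab) (S.mem_r_zero_self x)
  exact ⟨y, hxy⟩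

lemma mem_cmul_of_mem {U V : Set (Fin (d + 1))} {u v k : Fin (d + 1)} (hu : u ∈ U)
    (hv : v ∈ V) {x y z : X} (hxy : (x, y) ∈ S.r k) (hxz : (x, z) ∈ S.r u)
    (hzy : (z, y) ∈ S.r v) : k ∈ S.cmul U V :=
  ⟨u, hu, v, hv, S.pNum_pos_of_mem hxy hxz hzy⟩

lemma exists_mem_of_mem_cmul {U V : Set (Fin (d + 1))} {k : Fin (d + 1)} (hk : k ∈ S.cmul U V)
    {x y : X} (hxy : (x, y) ∈ S.r k) :
    ∃ u ∈ U, ∃ v ∈ V, ∃ z, (x, z) ∈ S.r u ∧ (z, y) ∈ S.r v := by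
  obtain ⟨u, hu, v, hv, hpos⟩ := hk
  exact ⟨u, hu, v, hv, S.exists_mem_of_pNum_pos hpos hxy⟩

lemma star_zero : S.star 0 = 0 := by
  obtain ⟨x⟩ := ‹Nonempty X›
  exact S.eq_of_mem_r ((S.mem_star 0 (x, x)).mpr (S.mem_r_zero_self x)) (S.mem_r_zero_self x)

lemma zero_mem_thinRadical : 0 ∈ S.thinRadical := by
  obtain ⟨x⟩ := ‹Nonempty X›
  change S.pNum 0 (S.star 0) 0 = 1
  rw [S.star_zero, ← S.ncard_eq 0 0 0 (x, x) (S.mem_r_zero_self x)]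
  simp [S.r_zero, eq_comm]

def Sibling (x y : X) : Prop := ∃ i c, (c, x) ∈ S.r i ∧ (c, y) ∈ S.r i

def siblingIndices : Set (Fin (d + 1)) :=
  {k | ∀ q ∈ S.r k, Relation.TransGen S.Sibling q.1 q.2}

variable {S}

lemma Sibling.refl (x : X) : S.Sibling x x := ⟨0, x, S.mem_r_zero_self x, S.mem_r_zero_self x⟩

lemma Sibling.symm {x y : X} : S.Sibling x y → S.Sibling y x
  | ⟨i, c, hx, hy⟩ => ⟨i, c, hy, hx⟩

instance : Std.Symm S.Sibling := ⟨fun _ _ => Sibling.symm⟩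

lemma transGen_sibling_of_sibling {a b x y : X} {i : Fin (d + 1)} (hab : S.Sibling a b)
    (hax : (a, x) ∈ S.r i) (hby : (b, y) ∈ S.r i) : Relation.TransGen S.Sibling x y := by
  obtain ⟨j, c, hca, hcb⟩ := hab
  obtain ⟨u, hcx⟩ := S.exists_mem_r (c, x)
  -- the path `c → x → a` of type `(u, i*)` over `(c, a) ∈ R_j` is matched over `(c, b) ∈ R_j`
  obtain ⟨z, hcz, hzb⟩ :=
    S.exists_mem_r_of_mem_r hca hcx ((S.mem_star i (x, a)).mpr hax) hcb
  have hbz : (b, z) ∈ S.r i := (S.mem_star i (z, b)).mp hzb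
  exact .tail (.single ⟨u, c, hcx, hcz⟩) ⟨i, b, hbz, hby⟩

lemma transGen_sibling_of_transGen_sibling {a b x y : X} {i : Fin (d + 1)}
    (hab : Relation.TransGen S.Sibling a b) (hax : (a, x) ∈ S.r i) (hby : (b, y) ∈ S.r i) :
    Relation.TransGen S.Sibling x y := by
  induction hab generalizing y with
  | single hab => exact transGen_sibling_of_sibling hab hax hby
  | tail _ hbc ih =>
    obtain ⟨y', hy'⟩ := S.exists_mem_r_right _ i
    exact (ih hy').trans (transGen_sibling_of_sibling hbc hy' hby)

variable (S)

lemma zero_mem_siblingIndices : 0 ∈ S.siblingIndices := by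
  rintro ⟨x, y⟩ hxy
  obtain rfl : x = y := by rwa [S.r_zero] at hxy
  exact .single (Sibling.refl x)

lemma isClosedSubset_siblingIndices : S.IsClosedSubset S.siblingIndices := by
  refine ⟨⟨0, S.zero_mem_siblingIndices⟩, ?_⟩
  rintro k hk ⟨x, y⟩ hxy
  obtain ⟨-, ⟨u, hu, rfl⟩, v, hv, z, hxz, hzy⟩ := S.exists_mem_of_mem_cmul hk hxy
  exact (symm (hu (z, x) ((S.mem_star u (x, z)).mp hxz))).trans (hv (z, y) hzy)

lemma isStronglyNormal_siblingIndices : S.IsStronglyNormal S.siblingIndices := by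
  refine ⟨S.isClosedSubset_siblingIndices, ?_⟩
  rintro i k hk ⟨x, y⟩ hxy
  obtain ⟨l, hl, v, hv, b, hxb, hby⟩ := S.exists_mem_of_mem_cmul hk hxy
  rw [Set.mem_singleton_iff.mp hv] at hby
  obtain ⟨-, rfl, w, hw, a, hxa, hab⟩ := S.exists_mem_of_mem_cmul hl hxb
  exact transGen_sibling_of_transGen_sibling (hw (a, b) hab) ((S.mem_star i (x, a)).mp hxa) hby

lemma thinResidue_subset_siblingIndices : S.thinResidue ⊆ S.siblingIndices :=
  Set.sInter_subset_of_mem S.isStronglyNormal_siblingIndices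

variable {S} {T : Set (Fin (d + 1))}

lemma IsSingular.mem_of_sibling (hT : S.IsSingular T) {a b e : X} {k z : Fin (d + 1)}
    (hsib : S.Sibling a b) (hz : z ∈ T) (hbe : (b, e) ∈ S.r z) (hae : (a, e) ∈ S.r k) :
    k ∈ T := by
  obtain ⟨y, c, hca, hcb⟩ := hsib
  obtain ⟨u, hab⟩ := S.exists_mem_r (a, b)
  have hac : (a, c) ∈ S.r (S.star y) := (S.mem_star y (a, c)).mpr hca
  -- `k ∈ R_0 R_{y*} R_y R_z`, read off the path `a → a → c → b → e`
  refine hT.2 0 S.zero_mem_thinRadical y z hz (S.mem_cmul_of_mem ?_ rfl hae hab hbe)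
  exact S.mem_cmul_of_mem (S.mem_cmul_of_mem rfl rfl hac (S.mem_r_zero_self a) hac) rfl
    hab hac hcb

lemma IsSingular.mem_of_transGen_sibling (hT : S.IsSingular T) {x y : X}
    (hxy : Relation.TransGen S.Sibling x y) {k : Fin (d + 1)} (hk : (x, y) ∈ S.r k) :
    k ∈ T := by
  induction hxy using Relation.TransGen.head_induction_on generalizing k with
  | single h => exact hT.mem_of_sibling h (hT.1 S.zero_mem_thinRadical) (S.mem_r_zero_self _) hk
  | head hxb _ ih =>
    obtain ⟨l, hl⟩ := S.exists_mem_r (_, y)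
    exact hT.mem_of_sibling hxb (ih hl) hl hk

lemma IsSingular.siblingIndices_subset (hT : S.IsSingular T) : S.siblingIndices ⊆ T :=
  fun k hk =>
    have ⟨q, hq⟩ := S.r_nonempty k
    hT.mem_of_transGen_sibling (hk q hq) hq

end AssocScheme

/-- If `T` is a singular subset of `S`, then `O^ϑ(S) ⊆ T`. -/
theorem thinResidue_subset_of_isSingular
    {X : Type*} [Fintype X] [Nonempty X] {d : ℕ} (S : AssocScheme X d)
    (T : Set (Fin (d + 1))) (hT : S.IsSingular T) :
    S.thinResidue ⊆ T :=
  S.thinResidue_subset_siblingIndices.trans hT.siblingIndices_subset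
end
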